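/- Fix a linear order on E and two connected vertex subsets. For any partition scheme m in G, the number of forests F in F^m_G with exactly j edges equals the absolute value of the coefficient of q^{|V|-j} in the chromatic polynomial P_G(q); in particular this number is independent of the choice of partition scheme m. -/

import Mathlib

attribute [-instance] Sym2.instPartialOrder

set_option linter.unusedSectionVars false
set_option maxHeartbeats 1000000

open scoped Classical

namespace BC

variable {V : Type*}

/-- The set of vertices incident to at least one edge of `τ`. -/
noncomputable def supp [Fintype V] (τ : Finset (Sym2 V)) : Finset V :=
  Finset.univ.filter (fun v => ∃ e ∈ τ, v ∈ e)

/-- The graph on vertex set `R` with edge set `F` is connected. -/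
def ConnOn (R : Finset V) (F : Finset (Sym2 V)) : Prop :=
  (SimpleGraph.induce (R : Set V) (SimpleGraph.fromEdgeSet (F : Set (Sym2 V)))).Connected

/-- Edges of `G` with both endpoints in `R` (edge set of the induced subgraph `G|_R`). -/
noncomputable def edgesIn [Fintype V] [DecidableEq V] (G : SimpleGraph V) [DecidableRel G.Adj]
    (R : Finset V) : Finset (Sym2 V) :=
  G.edgeFinset.filter (fun e => ∀ v ∈ e, v ∈ R)

/-- `g` is (the edge set of) a connected spanning subgraph of `G|_R`. -/
def IsCSS [Fintype V] [DecidableEq V] (G : SimpleGraph V) [DecidableRel G.Adj]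
    (R : Finset V) (g : Finset (Sym2 V)) : Prop :=
  g ⊆ edgesIn G R ∧ ConnOn R g

/-- `τ` is (the edge set of) a spanning tree of `G|_R`. -/
def IsSpanningTree [Fintype V] [DecidableEq V] (G : SimpleGraph V) [DecidableRel G.Adj]
    (R : Finset V) (τ : Finset (Sym2 V)) : Prop :=
  IsCSS G R τ ∧ τ.card = R.card - 1

/-- A forest: an edge set containing no cycle. -/
def IsForest (F : Finset (Sym2 V)) : Prop :=
  (SimpleGraph.fromEdgeSet (F : Set (Sym2 V))).IsAcyclic

/-- `τ` is the edge set of a nontrivial tree component of the forest `F`. -/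
def IsTreeComponent [Fintype V] (F τ : Finset (Sym2 V)) : Prop :=
  τ ⊆ F ∧ τ.Nonempty ∧ ConnOn (supp τ) τ ∧ ∀ e ∈ F \ τ, ∀ v ∈ e, v ∉ supp τ

/-- `C` is the edge set of a simple circuit (cycle) of `G`. -/
def IsCircuit (G : SimpleGraph V) (C : Finset (Sym2 V)) : Prop :=
  ∃ (v : V) (w : G.Walk v v), w.IsCycle ∧ w.edges.toFinset = C

/-- `B` is a broken circuit of `G`: a simple circuit minus its maximal edge. -/
def IsBrokenCircuit [LinearOrder (Sym2 V)] (G : SimpleGraph V) (B : Finset (Sym2 V)) : Prop :=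
  ∃ C e, IsCircuit G C ∧ e ∈ C ∧ (∀ f ∈ C, f ≤ e) ∧ B = C.erase e

/-- `m` is a partition scheme in `G`. -/
def IsPartitionScheme [Fintype V] [DecidableEq V] (G : SimpleGraph V) [DecidableRel G.Adj]
    (m : Finset (Sym2 V) → Finset (Sym2 V)) : Prop :=
  ∀ R : Finset V, 2 ≤ R.card → ConnOn R (edgesIn G R) →
    (∀ τ, IsSpanningTree G R τ → τ ⊆ m τ ∧ IsCSS G R (m τ)) ∧
    (∀ g, IsCSS G R g → ∃! τ, IsSpanningTree G R τ ∧ τ ⊆ g ∧ g ⊆ m τ)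

/-- The minimal-tree partition scheme: `μ(τ)` adds to `τ` every edge `{x,y}` of `G|_R`
larger than all the edges on the path in `τ` from `x` to `y`. -/
noncomputable def mu [Fintype V] [DecidableEq V] (G : SimpleGraph V) [DecidableRel G.Adj]
    [LinearOrder (Sym2 V)] (R : Finset V) (τ : Finset (Sym2 V)) : Finset (Sym2 V) :=
  τ ∪ (edgesIn G R).filter (fun e => e ∉ τ ∧ ∀ x y : V, e = s(x, y) →
    ∀ p : (SimpleGraph.fromEdgeSet (τ : Set (Sym2 V))).Walk x y, p.IsPath → ∀ f ∈ p.edges, f < e)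

/-- All unordered pairs of distinct elements of `R`. -/
noncomputable def allPairs [DecidableEq V] (R : Finset V) : Finset (Sym2 V) :=
  ((R ×ˢ R).filter (fun p => p.1 ≠ p.2)).image (fun p => s(p.1, p.2))

/-- `f` takes the same value at the two endpoints of `e`. -/
def eqOn (f : V → ℕ) (e : Sym2 V) : Prop :=
  Sym2.lift ⟨fun x y => f x = f y, fun x y => propext ⟨Eq.symm, Eq.symm⟩⟩ e




/-- abbreviation for the graph from an edge finset -/
noncomputable abbrev H (A : Finset (Sym2 V)) : SimpleGraph V :=
  SimpleGraph.fromEdgeSet (A : Set (Sym2 V))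

open SimpleGraph

lemma H_mono {A B : Finset (Sym2 V)} (h : A ⊆ B) : H A ≤ H B :=
  SimpleGraph.fromEdgeSet_mono (by exact_mod_cast h)

lemma H_adj {A : Finset (Sym2 V)} {u w : V} : (H A).Adj u w ↔ s(u, w) ∈ A ∧ u ≠ w := by
  simp [SimpleGraph.fromEdgeSet_adj]

/-- P1: reachability closure -/
lemma reachable_of_adj_reachable {K K' : SimpleGraph V}
    (h : ∀ u w, K.Adj u w → K'.Reachable u w) {u w : V} (hr : K.Reachable u w) :
    K'.Reachable u w := by
  obtain ⟨p⟩ := hr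
  induction p with
  | nil => exact Reachable.refl _
  | cons ha _ ih => exact (h _ _ ha).trans ih

/-- P2: components count congruence -/
lemma cc_congr {K K' : SimpleGraph V}
    (h : ∀ u w, K.Reachable u w ↔ K'.Reachable u w) :
    Nat.card K.ConnectedComponent = Nat.card K'.ConnectedComponent := by
  apply Nat.card_congr
  refine ⟨Quot.map id (fun u w hr => (h u w).1 hr), Quot.map id (fun u w hr => (h u w).2 hr),
    ?_, ?_⟩ <;> intro c <;> induction c using SimpleGraph.ConnectedComponent.ind <;> rfl

/-- walk lifting into induced subgraph -/
lemma walk_induce {K : SimpleGraph V} {R : Set V}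
    (hcl : ∀ ⦃u w⦄, K.Adj u w → u ∈ R ∧ w ∈ R) {u w : V} (p : K.Walk u w)
    (hu : u ∈ R) (hw : w ∈ R) :
    ∃ q : (SimpleGraph.induce R K).Walk ⟨u, hu⟩ ⟨w, hw⟩,
      q.edges.map (Sym2.map Subtype.val) = p.edges ∧
      q.support.map Subtype.val = p.support := by
  induction p with
  | nil => exact ⟨.nil, by simp, by simp⟩
  | @cons a b c ha p ih =>
    have hb : b ∈ R := (hcl ha).2
    obtain ⟨q, hq1, hq2⟩ := ih hb hw
    exact ⟨.cons (by exact ha : (SimpleGraph.induce R K).Adj ⟨a, hu⟩ ⟨b, hb⟩) q,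
      by show _ = s(a, b) :: p.edges; rw [← hq1]; rfl,
        by show _ = a :: p.support; rw [← hq2]; rfl⟩

lemma reachable_induce {K : SimpleGraph V} {R : Set V}
    (hcl : ∀ ⦃u w⦄, K.Adj u w → u ∈ R ∧ w ∈ R) {u w : V}
    (hu : u ∈ R) (hw : w ∈ R) (h : K.Reachable u w) :
    (SimpleGraph.induce R K).Reachable ⟨u, hu⟩ ⟨w, hw⟩ := by
  obtain ⟨p⟩ := h
  obtain ⟨q, -, -⟩ := walk_induce hcl p hu hw
  exact ⟨q⟩

lemma reachable_of_induce {K : SimpleGraph V} {R : Set V} {u w : R}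
    (h : (SimpleGraph.induce R K).Reachable u w) : K.Reachable u w := by
  obtain ⟨p⟩ := h
  exact ⟨p.map ⟨Subtype.val, fun ha => ha⟩⟩

section fintype
variable [Fintype V] [DecidableEq V]

lemma mem_supp_iff' {B : Finset (Sym2 V)} {v : V} : v ∈ supp B ↔ ∃ e ∈ B, v ∈ e := by
  simp [supp]

/-- edges within R: hypothesis form -/
def edgesWithin (B : Finset (Sym2 V)) (R : Finset V) : Prop :=
  ∀ e ∈ B, ∀ v ∈ e, v ∈ R

lemma adj_mem_of_edgesWithin {B : Finset (Sym2 V)} {R : Finset V}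
    (hB : edgesWithin B R) {u w : V} (h : (H B).Adj u w) : u ∈ R ∧ w ∈ R := by
  rw [H_adj] at h
  exact ⟨hB _ h.1 u (by simp), hB _ h.1 w (by simp)⟩

lemma connOn_mono {R : Finset V} {B C : Finset (Sym2 V)} (h : B ⊆ C)
    (hc : ConnOn R B) : ConnOn R C := by
  refine hc.mono ?_
  intro u w ha
  exact SimpleGraph.fromEdgeSet_mono (by exact_mod_cast h) ha

/-- From ConnOn get reachability in the ambient fromEdgeSet graph -/
lemma reachable_of_connOn {R : Finset V} {B : Finset (Sym2 V)} (hc : ConnOn R B)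
    {u w : V} (hu : u ∈ R) (hw : w ∈ R) : (H B).Reachable u w := by
  have h2 := hc.preconnected ⟨u, by exact_mod_cast hu⟩ ⟨w, by exact_mod_cast hw⟩
  obtain ⟨p⟩ := h2
  exact ⟨p.map ⟨Subtype.val, fun ha => ha⟩⟩

lemma connOn_of_reachable {R : Finset V} {B : Finset (Sym2 V)}
    (hB : edgesWithin B R) (hne : R.Nonempty)
    (hr : ∀ u ∈ R, ∀ w ∈ R, (H B).Reachable u w) : ConnOn R B := by
  have hcl : ∀ ⦃u w : V⦄, (H B).Adj u w → u ∈ (R : Set V) ∧ w ∈ (R : Set V) := by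
    intro u w h
    simpa using adj_mem_of_edgesWithin hB h
  rw [ConnOn, SimpleGraph.connected_iff]
  constructor
  · rintro ⟨u, hu⟩ ⟨w, hw⟩
    exact reachable_induce hcl (by simpa using hu) (by simpa using hw)
      (hr u (by simpa using hu) w (by simpa using hw))
  · obtain ⟨v, hv⟩ := hne
    exact ⟨⟨v, by simpa using hv⟩⟩

/-- every vertex of R is in supp B if ConnOn R B and 2 ≤ R.card -/
lemma supp_eq_of_connOn {R : Finset V} {B : Finset (Sym2 V)}
    (hB : edgesWithin B R) (hc : ConnOn R B) (h2 : 2 ≤ R.card) : supp B = R := by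
  apply Finset.Subset.antisymm
  · intro v hv
    rw [mem_supp_iff'] at hv
    obtain ⟨e, he, hve⟩ := hv
    exact hB e he v hve
  · intro u hu
    obtain ⟨w, hw, hne⟩ := Finset.exists_mem_ne (show 1 < R.card by omega) u
    have hr := reachable_of_connOn hc hu hw
    obtain ⟨p⟩ := hr
    cases p with
    | nil => exact absurd rfl (Ne.symm hne)
    | cons ha p =>
      rw [mem_supp_iff']
      rw [H_adj] at ha
      exact ⟨_, ha.1, by simp⟩

end fintype
lemma reachable_cases {K K' : SimpleGraph V} {x y : V}
    (hnr : ¬ K'.Reachable x y)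
    (hadj : ∀ u w, K.Adj u w → K'.Adj u w ∨ s(u, w) = s(x, y)) {u w : V}
    (h : K.Reachable u w) :
    K'.Reachable u w ∨ (K'.Reachable u x ∧ K'.Reachable y w) ∨
      (K'.Reachable u y ∧ K'.Reachable x w) := by
  obtain ⟨p⟩ := h
  induction p with
  | nil => exact Or.inl (Reachable.refl _)
  | @cons a b c ha p ih =>
    rcases hadj a b ha with h' | h'
    · have hab : K'.Reachable a b := h'.reachable
      rcases ih with h1 | ⟨h1, h2⟩ | ⟨h1, h2⟩
      · exact Or.inl (hab.trans h1)
      · exact Or.inr (Or.inl ⟨hab.trans h1, h2⟩)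
      · exact Or.inr (Or.inr ⟨hab.trans h1, h2⟩)
    · rw [Sym2.eq_iff] at h'
      rcases h' with ⟨rfl, rfl⟩ | ⟨rfl, rfl⟩
      · rcases ih with h1 | ⟨h1, h2⟩ | ⟨h1, h2⟩
        · exact Or.inr (Or.inl ⟨Reachable.refl _, h1⟩)
        · exact absurd h1.symm hnr
        · exact Or.inl h2
      · rcases ih with h1 | ⟨h1, h2⟩ | ⟨h1, h2⟩
        · exact Or.inr (Or.inr ⟨Reachable.refl _, h1⟩)
        · exact Or.inl h2
        · exact absurd h1 hnr

/-- deleting a bridge increases the component count by exactly one -/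
lemma bridge_count [Finite V] {K K' : SimpleGraph V} (hle : K' ≤ K) {x y : V}
    (hxy : K.Adj x y) (hnr : ¬ K'.Reachable x y)
    (hadj : ∀ u w, K.Adj u w → K'.Adj u w ∨ s(u, w) = s(x, y)) :
    Nat.card K'.ConnectedComponent = Nat.card K.ConnectedComponent + 1 := by
  classical
  set φ : K'.ConnectedComponent → K.ConnectedComponent :=
    SimpleGraph.ConnectedComponent.map (SimpleGraph.Hom.ofLE hle) with hφ
  have hmk : ∀ v : V, φ (K'.connectedComponentMk v) = K.connectedComponentMk v := fun v => rfl
  have hbij : Function.Bijective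
      (fun d : {d : K'.ConnectedComponent // d ≠ K'.connectedComponentMk y} => φ d.1) := by
    constructor
    · have key : ∀ d d' : K'.ConnectedComponent, d ≠ K'.connectedComponentMk y →
          d' ≠ K'.connectedComponentMk y → φ d = φ d' → d = d' := by
        intro d d'
        induction d using SimpleGraph.ConnectedComponent.ind with | _ u =>
        induction d' using SimpleGraph.ConnectedComponent.ind with | _ w =>
        intro hd hd' heq
        rw [hmk, hmk, SimpleGraph.ConnectedComponent.eq] at heq
        rcases reachable_cases hnr hadj heq with h1 | ⟨h1, h2⟩ | ⟨h1, h2⟩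
        · exact SimpleGraph.ConnectedComponent.sound h1
        · exact absurd (SimpleGraph.ConnectedComponent.sound h2.symm) hd'
        · exact absurd (SimpleGraph.ConnectedComponent.sound h1) hd
      rintro ⟨d, hd⟩ ⟨d', hd'⟩ heq
      exact Subtype.ext (key d d' hd hd' heq)
    · intro c
      induction c using SimpleGraph.ConnectedComponent.ind with | _ u =>
      by_cases hc : K'.Reachable u y
      · refine ⟨⟨K'.connectedComponentMk x, fun h => hnr (SimpleGraph.ConnectedComponent.eq.mp h)⟩, ?_⟩
        show φ (K'.connectedComponentMk x) = K.connectedComponentMk u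
        rw [hmk, SimpleGraph.ConnectedComponent.eq]
        exact ((hc.mono hle).trans hxy.symm.reachable).symm
      · exact ⟨⟨K'.connectedComponentMk u, fun h => hc (SimpleGraph.ConnectedComponent.eq.mp h)⟩, rfl⟩
  have hcard := Nat.card_eq_of_bijective _ hbij
  haveI : Finite K'.ConnectedComponent := Quot.finite _
  haveI : Finite K.ConnectedComponent := Quot.finite _
  letI iK' := Fintype.ofFinite K'.ConnectedComponent
  letI iK := Fintype.ofFinite K.ConnectedComponent
  rw [Nat.card_eq_fintype_card, Nat.card_eq_fintype_card] at hcard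
  rw [Nat.card_eq_fintype_card, Nat.card_eq_fintype_card]
  rw [← hcard]
  have h1 : Fintype.card {d : K'.ConnectedComponent // d = K'.connectedComponentMk y} = 1 :=
    Fintype.card_subtype_eq _
  have h2 : Fintype.card {d : K'.ConnectedComponent // ¬ d = K'.connectedComponentMk y}
      = Fintype.card K'.ConnectedComponent
        - Fintype.card {d : K'.ConnectedComponent // d = K'.connectedComponentMk y} :=
    Fintype.card_subtype_compl _
  haveI : Nonempty K'.ConnectedComponent := ⟨K'.connectedComponentMk y⟩
  have h3 : 1 ≤ Fintype.card K'.ConnectedComponent := Fintype.card_pos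
  have h4 : Fintype.card {d : K'.ConnectedComponent // d ≠ K'.connectedComponentMk y}
      = Fintype.card {d : K'.ConnectedComponent // ¬ d = K'.connectedComponentMk y} := rfl
  omega

section fintype2
variable [Fintype V] [DecidableEq V]

noncomputable def cc (A : Finset (Sym2 V)) : ℕ := Nat.card (H A).ConnectedComponent

lemma cc_empty : cc (∅ : Finset (Sym2 V)) = Fintype.card V := by
  rw [cc, ← Nat.card_eq_fintype_card]
  apply Nat.card_congr
  refine ⟨fun c => c.lift id ?_, fun v => SimpleGraph.connectedComponentMk _ v, ?_, fun v => rfl⟩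
  · intro v w p _
    cases p with
    | nil => rfl
    | cons ha _ => simp [H_adj] at ha
  · intro c
    induction c using SimpleGraph.ConnectedComponent.ind
    rfl

lemma acyclic_anti {K K' : SimpleGraph V} (h : K ≤ K') (ha : K'.IsAcyclic) : K.IsAcyclic :=
  fun _ c hc => ha (c.mapLe h) (hc.mapLe h)

lemma cc_erase_eq {B : Finset (Sym2 V)} {x y : V} (he : s(x, y) ∈ B)
    (hr : (H (B.erase s(x, y))).Reachable x y) : cc (B.erase s(x, y)) = cc B := by
  apply cc_congr
  intro u w
  constructor
  · exact reachable_of_adj_reachable fun u w h => (H_mono (Finset.erase_subset _ _) h).reachable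
  · refine reachable_of_adj_reachable fun u w h => ?_
    rw [H_adj] at h
    by_cases hee : s(u, w) = s(x, y)
    · rw [Sym2.eq_iff] at hee
      rcases hee with ⟨rfl, rfl⟩ | ⟨rfl, rfl⟩
      · exact hr
      · exact hr.symm
    · exact SimpleGraph.Adj.reachable (by rw [H_adj]; exact ⟨Finset.mem_erase.mpr ⟨hee, h.1⟩, h.2⟩)

lemma cc_erase_bridge {B : Finset (Sym2 V)} {x y : V} (he : s(x, y) ∈ B) (hxy : x ≠ y)
    (hnr : ¬ (H (B.erase s(x, y))).Reachable x y) : cc (B.erase s(x, y)) = cc B + 1 := by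
  apply bridge_count (H_mono (Finset.erase_subset _ _)) (by rw [H_adj]; exact ⟨he, hxy⟩) hnr
  intro u w h
  rw [H_adj] at h
  by_cases hee : s(u, w) = s(x, y)
  · exact Or.inr hee
  · exact Or.inl (by rw [H_adj]; exact ⟨Finset.mem_erase.mpr ⟨hee, h.1⟩, h.2⟩)

lemma cc_card_ge (B : Finset (Sym2 V)) (hd : ∀ e ∈ B, ¬ e.IsDiag) :
    Fintype.card V ≤ cc B + B.card := by
  induction B using Finset.strongInduction with | _ B ih =>
  rcases Finset.eq_empty_or_nonempty B with rfl | ⟨e, he⟩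
  · rw [cc_empty]; simp
  · induction e using Sym2.ind with | _ x y =>
    have hxy : x ≠ y := fun h => hd _ he (by rw [h]; exact Sym2.mk_isDiag_iff.mpr rfl)
    have hsub : B.erase s(x, y) ⊂ B := Finset.erase_ssubset he
    have hih := ih _ hsub (fun e h => hd e (hsub.1 h))
    have hcard : (B.erase s(x, y)).card + 1 = B.card := Finset.card_erase_add_one he
    by_cases hr : (H (B.erase s(x, y))).Reachable x y
    · have := cc_erase_eq he hr; omega
    · have := cc_erase_bridge he hxy hr; omega

lemma cc_card_forest (B : Finset (Sym2 V)) (hd : ∀ e ∈ B, ¬ e.IsDiag)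
    (ha : (H B).IsAcyclic) : cc B + B.card = Fintype.card V := by
  induction B using Finset.strongInduction with | _ B ih =>
  rcases Finset.eq_empty_or_nonempty B with rfl | ⟨e, he⟩
  · rw [cc_empty]; simp
  · induction e using Sym2.ind with | _ x y =>
    have hxy : x ≠ y := fun h => hd _ he (by rw [h]; exact Sym2.mk_isDiag_iff.mpr rfl)
    have hsub : B.erase s(x, y) ⊂ B := Finset.erase_ssubset he
    have hih := ih _ hsub (fun e h => hd e (hsub.1 h))
      (acyclic_anti (H_mono hsub.1) ha)
    have hcard : (B.erase s(x, y)).card + 1 = B.card := Finset.card_erase_add_one he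
    have hbr : (H B).IsBridge s(x, y) :=
      (isAcyclic_iff_forall_edge_isBridge.mp ha) (by rw [mem_edgeSet, H_adj]; exact ⟨he, hxy⟩)
    have hnr : ¬ (H (B.erase s(x, y))).Reachable x y := by
      intro hreach
      apply hbr
      refine reachable_of_adj_reachable (fun u w h => SimpleGraph.Adj.reachable ?_) hreach
      rw [H_adj, Finset.mem_erase] at h
      rw [SimpleGraph.deleteEdges, SimpleGraph.sdiff_adj]
      refine ⟨by rw [H_adj]; exact ⟨h.1.2, h.2⟩, ?_⟩
      rw [SimpleGraph.fromEdgeSet_adj]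
      exact fun hc => h.1.1 (by simpa using hc.1)
    have := cc_erase_bridge he hxy hnr
    omega

lemma supp_card_le (B : Finset (Sym2 V)) : (supp B).card ≤ Fintype.card V :=
  Finset.card_le_univ _

lemma cc_connOn {B : Finset (Sym2 V)} (hne : B.Nonempty) (hc : ConnOn (supp B) B) :
    cc B + (supp B).card = Fintype.card V + 1 := by
  classical
  obtain ⟨e, he⟩ := hne
  have hv0 : e.out.1 ∈ supp B := mem_supp_iff'.mpr ⟨e, he, Sym2.out_fst_mem e⟩
  set v₀ := e.out.1
  have hiso : ∀ v : V, v ∉ supp B → ∀ w, (H B).Reachable v w → v = w := by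
    intro v hv w hr
    obtain ⟨p⟩ := hr
    cases p with
    | nil => rfl
    | cons ha p =>
      rw [H_adj] at ha
      exact absurd (mem_supp_iff'.mpr ⟨_, ha.1, by simp⟩) hv
  have hbij : Function.Bijective
      (Sum.elim (fun v : {v : V // v ∉ supp B} => (H B).connectedComponentMk v.1)
        (fun _ : Unit => (H B).connectedComponentMk v₀)) := by
    constructor
    · rintro (⟨v, hv⟩ | ⟨⟩) (⟨w, hw⟩ | ⟨⟩) heq <;>
        simp only [Sum.elim_inl, Sum.elim_inr, SimpleGraph.ConnectedComponent.eq] at heq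
      · exact congrArg _ (Subtype.ext (hiso v hv w heq))
      · exact absurd (hiso v hv v₀ heq ▸ hv0) hv
      · exact absurd ((hiso w hw v₀ heq.symm) ▸ hv0) hw
      · rfl
    · intro c
      induction c using SimpleGraph.ConnectedComponent.ind with | _ w =>
      by_cases hw : w ∈ supp B
      · exact ⟨Sum.inr ⟨⟩, SimpleGraph.ConnectedComponent.sound
          (reachable_of_connOn hc hv0 hw)⟩
      · exact ⟨Sum.inl ⟨w, hw⟩, rfl⟩
  have hcount := Nat.card_eq_of_bijective _ hbij
  rw [Nat.card_sum] at hcount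
  have h1 : Nat.card {v : V // v ∉ supp B} = Fintype.card V - (supp B).card := by
    rw [Nat.card_eq_fintype_card]
    have := Fintype.card_subtype_compl (p := fun v : V => v ∈ supp B)
    simpa using this
  have h2 := supp_card_le B
  have h3 : (supp B).Nonempty := ⟨v₀, hv0⟩
  have h4 : 1 ≤ (supp B).card := Finset.card_pos.mpr h3
  have h5 : Nat.card Unit = 1 := by simp
  rw [cc, ← hcount, h1, h5]
  omega

end fintype2
section comp
variable [Fintype V] [DecidableEq V]

noncomputable def compF (A : Finset (Sym2 V)) (v : V) : Finset V :=
  Finset.univ.filter (fun w => (H A).Reachable v w)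

noncomputable def restrict (A : Finset (Sym2 V)) (R : Finset V) : Finset (Sym2 V) :=
  A.filter (fun e => ∀ v ∈ e, v ∈ R)

open SimpleGraph

lemma mem_compF {A : Finset (Sym2 V)} {v w : V} : w ∈ compF A v ↔ (H A).Reachable v w := by
  simp [compF]

lemma self_mem_compF {A : Finset (Sym2 V)} {v : V} : v ∈ compF A v :=
  mem_compF.mpr (Reachable.refl _)

lemma compF_eq_of_mem {A : Finset (Sym2 V)} {v u : V} (h : u ∈ compF A v) :
    compF A v = compF A u := by
  rw [mem_compF] at h
  ext w
  rw [mem_compF, mem_compF]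
  exact ⟨fun hw => h.symm.trans hw, fun hw => h.trans hw⟩

lemma mem_restrict {A : Finset (Sym2 V)} {R : Finset V} {e : Sym2 V} :
    e ∈ restrict A R ↔ e ∈ A ∧ ∀ v ∈ e, v ∈ R := by simp [restrict]

lemma restrict_subset {A : Finset (Sym2 V)} {R : Finset V} : restrict A R ⊆ A :=
  Finset.filter_subset _ _

lemma edgesWithin_restrict {A : Finset (Sym2 V)} {R : Finset V} :
    edgesWithin (restrict A R) R := by
  intro e he v hv
  exact (mem_restrict.mp he).2 v hv

lemma edge_mem_restrict_compF {A : Finset (Sym2 V)} {e : Sym2 V} {v : V}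
    (he : e ∈ A) (hv : v ∈ e) : e ∈ restrict A (compF A v) := by
  induction e using Sym2.ind with | _ x y =>
  rw [Sym2.mem_iff] at hv
  rw [mem_restrict]
  refine ⟨he, ?_⟩
  by_cases hxy : x = y
  · subst hxy
    rcases hv with rfl | rfl <;> intro u hu <;> rw [Sym2.mem_iff] at hu <;>
      rcases hu with rfl | rfl <;> exact self_mem_compF
  · have hadj : (H A).Adj x y := H_adj.mpr ⟨he, hxy⟩
    intro u hu
    rw [Sym2.mem_iff] at hu
    rw [mem_compF]
    rcases hv with rfl | rfl <;> rcases hu with rfl | rfl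
    · exact Reachable.refl _
    · exact hadj.reachable
    · exact hadj.symm.reachable
    · exact Reachable.refl _

lemma mem_compF_of_mem_edge {A : Finset (Sym2 V)} {e : Sym2 V} {v u : V}
    (he : e ∈ A) (hv : v ∈ e) (hu : u ∈ e) : u ∈ compF A v :=
  (mem_restrict.mp (edge_mem_restrict_compF he hv)).2 u hu

lemma edge_mem_restrict_of_endpoint {A : Finset (Sym2 V)} {e : Sym2 V} {v u : V}
    (he : e ∈ A) (hu : u ∈ e) (humem : u ∈ compF A v) :
    e ∈ restrict A (compF A v) := by
  rw [compF_eq_of_mem humem]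
  exact edge_mem_restrict_compF he hu

lemma two_le_card_compF {A : Finset (Sym2 V)} {v : V}
    (hd : ∀ e ∈ A, ¬ e.IsDiag) (hv : v ∈ supp A) : 2 ≤ (compF A v).card := by
  rw [mem_supp_iff'] at hv
  obtain ⟨e, he, hve⟩ := hv
  induction e using Sym2.ind with | _ x y =>
  have hxy : x ≠ y := fun h => hd _ he (by rw [h]; exact Sym2.mk_isDiag_iff.mpr rfl)
  have hx : x ∈ compF A v := mem_compF_of_mem_edge he hve (by simp)
  have hy : y ∈ compF A v := mem_compF_of_mem_edge he hve (Sym2.mem_mk_right _ _)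
  exact Finset.one_lt_card.mpr ⟨x, hx, y, hy, hxy⟩

lemma reachable_restrict_compF {A : Finset (Sym2 V)} {v u : V} (h : u ∈ compF A v) :
    (H (restrict A (compF A v))).Reachable v u := by
  rw [mem_compF] at h
  obtain ⟨p⟩ := h
  have key : ∀ {a b : V}, (H A).Walk a b → a ∈ compF A v →
      (H (restrict A (compF A v))).Reachable a b := by
    intro a b p
    induction p with
    | nil => exact fun _ => Reachable.refl _
    | @cons a c b ha p ih =>
      intro hmem
      have hadj := ha
      rw [H_adj] at hadj
      have hc : c ∈ compF A v := by
        rw [mem_compF] at hmem ⊢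
        exact hmem.trans ha.reachable
      have hedge : s(a, c) ∈ restrict A (compF A v) :=
        edge_mem_restrict_of_endpoint hadj.1 (by simp) hmem
      exact Reachable.trans (H_adj.mpr ⟨hedge, hadj.2⟩).reachable (ih hc)
  exact key p self_mem_compF

lemma connOn_restrict_compF {A : Finset (Sym2 V)} {v : V} :
    ConnOn (compF A v) (restrict A (compF A v)) := by
  apply connOn_of_reachable edgesWithin_restrict ⟨v, self_mem_compF⟩
  intro u hu w hw
  exact (reachable_restrict_compF hu).symm.trans (reachable_restrict_compF hw)

lemma supp_restrict_compF {A : Finset (Sym2 V)} {v : V}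
    (hd : ∀ e ∈ A, ¬ e.IsDiag) (hv : v ∈ supp A) :
    supp (restrict A (compF A v)) = compF A v :=
  supp_eq_of_connOn edgesWithin_restrict connOn_restrict_compF (two_le_card_compF hd hv)

end comp
section scheme
open SimpleGraph
variable [Fintype V] [DecidableEq V] (G : SimpleGraph V) [DecidableRel G.Adj]

lemma mem_edgesIn {R : Finset V} {e : Sym2 V} :
    e ∈ edgesIn G R ↔ e ∈ G.edgeFinset ∧ ∀ v ∈ e, v ∈ R := by simp [edgesIn]

variable {G}

lemma nondiag_of_subset_edgeFinset {A : Finset (Sym2 V)} (hA : A ⊆ G.edgeFinset) :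
    ∀ e ∈ A, ¬ e.IsDiag := fun e he =>
  SimpleGraph.not_isDiag_of_mem_edgeSet G (SimpleGraph.mem_edgeFinset.mp (hA he))

lemma edgesWithin_of_subset_edgesIn {B : Finset (Sym2 V)} {R : Finset V}
    (h : B ⊆ edgesIn G R) : edgesWithin B R := fun e he v hv =>
  ((mem_edgesIn G).mp (h he)).2 v hv

/-- an acyclicity criterion: connected on R with |R| - 1 edges -/
lemma acyclic_of_conn_card {R : Finset V} {B : Finset (Sym2 V)}
    (hd : ∀ e ∈ B, ¬ e.IsDiag) (hB : edgesWithin B R) (hc : ConnOn R B)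
    (hcard : B.card + 1 = R.card) : (H B).IsAcyclic := by
  by_contra hcyc
  rw [SimpleGraph.IsAcyclic] at hcyc
  push_neg at hcyc
  obtain ⟨v, c, hcIsCyc⟩ := hcyc
  -- get an edge of the cycle
  have hne : c.edges ≠ [] := by
    cases c with
    | nil => exact absurd rfl hcIsCyc.ne_nil
    | cons ha p => simp
  obtain ⟨e, he⟩ := List.exists_mem_of_ne_nil _ hne
  have heB : e ∈ B ∧ ¬ e.IsDiag := by
    have := c.edges_subset_edgeSet he
    rw [SimpleGraph.edgeSet_fromEdgeSet] at this
    simpa using ⟨this.1, this.2⟩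
  induction e using Sym2.ind with | _ x y =>
  have hxy : x ≠ y := fun h => heB.2 (by rw [h]; exact Sym2.mk_isDiag_iff.mpr rfl)
  -- the edge is not a bridge
  have hnb : ¬ (H B).IsBridge s(x, y) := by
    rw [SimpleGraph.isBridge_iff_adj_and_forall_cycle_notMem (by rw [mem_edgeSet]; exact H_adj.mpr ⟨heB.1, hxy⟩)]
    push_neg
    exact ⟨v, c, hcIsCyc, he⟩
  rw [SimpleGraph.isBridge_iff] at hnb
  push_neg at hnb
  have hreach : (H (B.erase s(x, y))).Reachable x y := by
    have h2 := hnb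
    refine reachable_of_adj_reachable (fun u w h => SimpleGraph.Adj.reachable ?_) h2
    rw [SimpleGraph.deleteEdges, SimpleGraph.sdiff_adj, H_adj, SimpleGraph.fromEdgeSet_adj] at h
    rw [H_adj]
    refine ⟨Finset.mem_erase.mpr ⟨?_, h.1.1⟩, h.1.2⟩
    intro hc'
    exact h.2 ⟨by simpa using hc', h.1.2⟩
  have h1 : cc (B.erase s(x, y)) = cc B := cc_erase_eq heB.1 hreach
  have h2 := cc_card_ge (B.erase s(x, y)) (fun e h => hd e (Finset.erase_subset _ _ h))
  have h3 : 2 ≤ R.card := by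
    have : 1 ≤ B.card := Finset.card_pos.mpr ⟨_, heB.1⟩
    omega
  have h4 : supp B = R := supp_eq_of_connOn hB hc h3
  have h5 : cc B + (supp B).card = Fintype.card V + 1 :=
    cc_connOn ⟨_, heB.1⟩ (h4 ▸ hc)
  have h6 : (B.erase s(x, y)).card + 1 = B.card := Finset.card_erase_add_one heB.1
  rw [h4] at h5
  omega

variable (G) in
/-- the chosen spanning tree relation -/
def chosenT (m : Finset (Sym2 V) → Finset (Sym2 V)) (A : Finset (Sym2 V)) (R : Finset V)
    (τ : Finset (Sym2 V)) : Prop :=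
  IsSpanningTree G R τ ∧ τ ⊆ restrict A R ∧ restrict A R ⊆ m τ

variable {m : Finset (Sym2 V) → Finset (Sym2 V)} (hm : IsPartitionScheme G m)

lemma restrict_subset_edgesIn {A : Finset (Sym2 V)} (hA : A ⊆ G.edgeFinset) {R : Finset V} :
    restrict A R ⊆ edgesIn G R := by
  intro e he
  rw [mem_restrict] at he
  exact (mem_edgesIn G).mpr ⟨hA he.1, he.2⟩

include hm in
lemma exists_unique_chosenT {A : Finset (Sym2 V)} (hA : A ⊆ G.edgeFinset) {v : V}
    (hv : v ∈ supp A) : ∃! τ, chosenT G m A (compF A v) τ := by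
  have hd := nondiag_of_subset_edgeFinset hA
  have h2 := two_le_card_compF hd hv
  have hconn : ConnOn (compF A v) (edgesIn G (compF A v)) :=
    connOn_mono (restrict_subset_edgesIn hA) connOn_restrict_compF
  have hCSS : IsCSS G (compF A v) (restrict A (compF A v)) :=
    ⟨restrict_subset_edgesIn hA, connOn_restrict_compF⟩
  exact (hm (compF A v) h2 hconn).2 _ hCSS

/-- basic facts about a chosen spanning tree of a component -/
lemma chosenT_props {A : Finset (Sym2 V)} (hA : A ⊆ G.edgeFinset) {v : V}
    (hv : v ∈ supp A) {τ : Finset (Sym2 V)} (hτ : chosenT G m A (compF A v) τ) :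
    supp τ = compF A v ∧ τ.Nonempty ∧ τ ⊆ A := by
  have hd := nondiag_of_subset_edgeFinset hA
  have h2 := two_le_card_compF hd hv
  have hsub : τ ⊆ A := hτ.2.1.trans restrict_subset
  have hW : edgesWithin τ (compF A v) :=
    edgesWithin_of_subset_edgesIn hτ.1.1.1
  have hsupp : supp τ = compF A v := supp_eq_of_connOn hW hτ.1.1.2 h2
  have hne : τ.Nonempty := by
    rw [← Finset.card_pos, hτ.1.2]
    omega
  exact ⟨hsupp, hne, hsub⟩

/-- general fact: restrict to a component is a tree component candidate (for any A) -/
lemma isTreeComponent_restrict {A : Finset (Sym2 V)} (hA : A ⊆ G.edgeFinset) {v : V}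
    (hv : v ∈ supp A) : IsTreeComponent A (restrict A (compF A v)) := by
  have hd := nondiag_of_subset_edgeFinset hA
  refine ⟨restrict_subset, ?_, ?_, ?_⟩
  · rw [mem_supp_iff'] at hv
    obtain ⟨e, he, hve⟩ := hv
    exact ⟨e, edge_mem_restrict_compF he hve⟩
  · rw [supp_restrict_compF hd hv]
    exact connOn_restrict_compF
  · intro e he u hu hus
    simp only [Finset.mem_sdiff] at he
    rw [supp_restrict_compF hd hv] at hus
    exact he.2 (edge_mem_restrict_of_endpoint he.1 hu hus)

/-- tree components are exactly the component restrictions -/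
lemma isTreeComponent_eq {A τ : Finset (Sym2 V)} (hτ : IsTreeComponent A τ) {v : V}
    (hv : v ∈ supp τ) : supp τ = compF A v ∧ τ = restrict A (compF A v) := by
  obtain ⟨hsub, hne, hconn, hsep⟩ := hτ
  have key : ∀ {a b : V}, (H A).Walk a b → a ∈ supp τ → b ∈ supp τ := by
    intro a b p
    induction p with
    | nil => exact id
    | @cons a b c ha p ih =>
      intro hva
      have hab := ha
      rw [H_adj] at hab
      have hbmem : b ∈ supp τ := by
        by_cases hmem : s(a, b) ∈ τ
        · exact mem_supp_iff'.mpr ⟨_, hmem, Sym2.mem_mk_right _ _⟩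
        · exact absurd hva (hsep _ (by simp only [Finset.mem_sdiff]; exact ⟨hab.1, hmem⟩) a (by simp))
      exact ih hbmem
  have hsupp : supp τ = compF A v := by
    apply Finset.Subset.antisymm
    · intro w hw
      rw [mem_compF]
      exact reachable_of_adj_reachable
        (fun a b hab => ((H_mono hsub) hab).reachable) (reachable_of_connOn hconn hv hw)
    · intro w hw
      rw [mem_compF] at hw
      obtain ⟨p⟩ := hw
      exact key p hv
  refine ⟨hsupp, Finset.Subset.antisymm ?_ ?_⟩
  · intro e he
    rw [mem_restrict, ← hsupp]
    exact ⟨hsub he, fun u hu => mem_supp_iff'.mpr ⟨e, he, hu⟩⟩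
  · intro e he
    rw [mem_restrict, ← hsupp] at he
    by_contra hmem
    exact hsep _ (by simp only [Finset.mem_sdiff]; exact ⟨he.1, hmem⟩) _ (Sym2.out_fst_mem e)
      (he.2 _ (Sym2.out_fst_mem e))

lemma isTreeComponent_eq' {A τ : Finset (Sym2 V)} (hτ : IsTreeComponent A τ) {v : V}
    (hv : v ∈ supp τ) : v ∈ supp A := by
  rw [mem_supp_iff'] at hv ⊢
  obtain ⟨e, he, hve⟩ := hv
  exact ⟨e, hτ.1 he, hve⟩

include hm in
/-- tree components of forests are spanning trees with good m-properties -/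
lemma treeComponent_spanningTree {F τ : Finset (Sym2 V)} (hF : F ⊆ G.edgeFinset)
    (hforest : IsForest F) (hτ : IsTreeComponent F τ) :
    IsSpanningTree G (supp τ) τ ∧ τ ⊆ m τ ∧ m τ ⊆ edgesIn G (supp τ) ∧
      2 ≤ (supp τ).card := by
  obtain ⟨hsub, hne, hconn, hsep⟩ := hτ
  have hd : ∀ e ∈ τ, ¬ e.IsDiag := nondiag_of_subset_edgeFinset (hsub.trans hF)
  have h2 : 2 ≤ (supp τ).card := by
    obtain ⟨e, he⟩ := hne
    induction e using Sym2.ind with | _ x y =>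
    have hxy : x ≠ y := fun h => hd _ he (by rw [h]; exact Sym2.mk_isDiag_iff.mpr rfl)
    exact Finset.one_lt_card.mpr ⟨x, mem_supp_iff'.mpr ⟨_, he, by simp⟩, y,
      mem_supp_iff'.mpr ⟨_, he, Sym2.mem_mk_right _ _⟩, hxy⟩
  have hacy : (H τ).IsAcyclic := acyclic_anti (H_mono hsub) hforest
  have hcount1 : cc τ + τ.card = Fintype.card V := cc_card_forest τ hd hacy
  have hcount2 : cc τ + (supp τ).card = Fintype.card V + 1 := cc_connOn hne hconn
  have hcard : τ.card = (supp τ).card - 1 := by omega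
  have hsubE : τ ⊆ edgesIn G (supp τ) := by
    intro e he
    exact (mem_edgesIn G).mpr ⟨hF (hsub he), fun u hu => mem_supp_iff'.mpr ⟨e, he, hu⟩⟩
  have hST : IsSpanningTree G (supp τ) τ := ⟨⟨hsubE, hconn⟩, hcard⟩
  have hmm := (hm (supp τ) h2 (connOn_mono hsubE hconn)).1 τ hST
  exact ⟨hST, hmm.1, hmm.2.1, h2⟩

variable (G m) in
noncomputable def Phi (A : Finset (Sym2 V)) : Finset (Sym2 V) :=
  A.filter (fun e => ∃ v ∈ e, ∃ τ, chosenT G m A (compF A v) τ ∧ e ∈ τ)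

variable (G m) in
noncomputable def MF (F : Finset (Sym2 V)) : Finset (Sym2 V) :=
  F ∪ G.edgeFinset.filter (fun e => ∃ τ, IsTreeComponent F τ ∧ e ∈ m τ)

lemma Phi_subset {A : Finset (Sym2 V)} : Phi G m A ⊆ A := Finset.filter_subset _ _

lemma MF_subset_edgeFinset {F : Finset (Sym2 V)} (hF : F ⊆ G.edgeFinset) :
    MF G m F ⊆ G.edgeFinset :=
  Finset.union_subset hF (Finset.filter_subset _ _)

lemma subset_MF_left {F : Finset (Sym2 V)} : F ⊆ MF G m F := Finset.subset_union_left

include hm in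
lemma mem_Phi_of_chosen {A : Finset (Sym2 V)} (hA : A ⊆ G.edgeFinset) {v : V}
    (hv : v ∈ supp A) {τ : Finset (Sym2 V)} (hτ : chosenT G m A (compF A v) τ) :
    τ ⊆ Phi G m A := by
  intro e he
  have heR := hτ.2.1 he
  rw [mem_restrict] at heR
  have hx : e.out.1 ∈ e := Sym2.out_fst_mem e
  have hxR : e.out.1 ∈ compF A v := heR.2 _ hx
  have hcc : compF A v = compF A e.out.1 := compF_eq_of_mem hxR
  rw [Phi, Finset.mem_filter]
  exact ⟨heR.1, e.out.1, hx, τ, hcc ▸ hτ, he⟩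

include hm in
lemma Phi_mem_tree {A : Finset (Sym2 V)} (hA : A ⊆ G.edgeFinset) {e : Sym2 V} {u : V}
    {τ : Finset (Sym2 V)} (he : e ∈ Phi G m A) (hu : u ∈ e)
    (hτ : chosenT G m A (compF A u) τ) : e ∈ τ := by
  rw [Phi, Finset.mem_filter] at he
  obtain ⟨heA, v, hv, τ', hτ', heτ'⟩ := he
  have huv : u ∈ compF A v := mem_compF_of_mem_edge heA hv hu
  have hcc : compF A v = compF A u := compF_eq_of_mem huv
  rw [hcc] at hτ'
  have hus : u ∈ supp A := mem_supp_iff'.mpr ⟨e, heA, hu⟩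
  obtain ⟨τ₀, h₀, huniq⟩ := exists_unique_chosenT hm hA hus
  rw [huniq τ' hτ', ← huniq τ hτ] at heτ'
  exact heτ'

include hm in
lemma Phi_isForest {A : Finset (Sym2 V)} (hA : A ⊆ G.edgeFinset) :
    IsForest (Phi G m A) := by
  intro v c hc
  cases c with
  | nil => exact hc.ne_nil rfl
  | @cons _ b _ ha p =>
    have hadj := ha
    rw [H_adj] at hadj
    have hvA : v ∈ supp A := mem_supp_iff'.mpr ⟨_, Phi_subset hadj.1, by simp⟩
    obtain ⟨τ, hτ, -⟩ := exists_unique_chosenT hm hA hvA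
    have hprops := chosenT_props hA hvA hτ
    have key : ∀ {a b' : V} (q : (H (Phi G m A)).Walk a b'), a ∈ compF A v →
        ∀ f ∈ q.edges, f ∈ τ := by
      intro a b' q
      induction q with
      | nil => intro _ f hf; simp at hf
      | @cons a c b' ha' q ih =>
        intro haR f hf
        have hadj' := ha'
        rw [H_adj] at hadj'
        have heA : s(a, c) ∈ A := Phi_subset hadj'.1
        have hcR : c ∈ compF A v := by
          have h3 := mem_compF_of_mem_edge heA (by simp : a ∈ s(a, c)) (Sym2.mem_mk_right a c)
          rwa [← compF_eq_of_mem haR] at h3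
        rw [SimpleGraph.Walk.edges_cons, List.mem_cons] at hf
        rcases hf with rfl | hf
        · exact Phi_mem_tree hm hA hadj'.1 (by simp) (compF_eq_of_mem haR ▸ hτ)
        · exact ih hcR f hf
    have hedges : ∀ f ∈ (SimpleGraph.Walk.cons ha p).edges, f ∈ (H τ).edgeSet := by
      intro f hf
      have hfτ : f ∈ τ := key _ self_mem_compF f hf
      have hfA : f ∈ A := hprops.2.2 hfτ
      rw [SimpleGraph.edgeSet_fromEdgeSet]
      exact ⟨by exact_mod_cast hfτ, nondiag_of_subset_edgeFinset hA f hfA⟩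
    have hc2 := hc.transfer hedges
    have h2 := two_le_card_compF (nondiag_of_subset_edgeFinset hA) hvA
    exact acyclic_of_conn_card
      (fun e he => nondiag_of_subset_edgeFinset hA e (hprops.2.2 he))
      (edgesWithin_of_subset_edgesIn hτ.1.1.1) hτ.1.1.2
      (by have := hτ.1.2; omega) _ hc2

include hm in
lemma Phi_cc {A : Finset (Sym2 V)} (hA : A ⊆ G.edgeFinset) : cc A = cc (Phi G m A) := by
  apply cc_congr
  intro u w
  constructor
  · refine reachable_of_adj_reachable (fun a b hab => ?_)
    have hadj := hab
    rw [H_adj] at hadj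
    have haA : a ∈ supp A := mem_supp_iff'.mpr ⟨_, hadj.1, by simp⟩
    obtain ⟨τ, hτ, -⟩ := exists_unique_chosenT hm hA haA
    have hbR : b ∈ compF A a :=
      mem_compF_of_mem_edge hadj.1 (by simp : a ∈ s(a, b)) (Sym2.mem_mk_right a b)
    have hr : (H τ).Reachable a b := reachable_of_connOn hτ.1.1.2 self_mem_compF hbR
    exact reachable_of_adj_reachable
      (fun x y hxy => ((H_mono (mem_Phi_of_chosen hm hA haA hτ)) hxy).reachable) hr
  · exact reachable_of_adj_reachable (fun a b hab => ((H_mono Phi_subset) hab).reachable)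

include hm in
lemma Phi_TC {A : Finset (Sym2 V)} (hA : A ⊆ G.edgeFinset) {v : V} (hv : v ∈ supp A)
    {τ : Finset (Sym2 V)} (hτ : chosenT G m A (compF A v) τ) :
    IsTreeComponent (Phi G m A) τ := by
  have hprops := chosenT_props hA hv hτ
  refine ⟨mem_Phi_of_chosen hm hA hv hτ, hprops.2.1, ?_, ?_⟩
  · rw [hprops.1]
    exact hτ.1.1.2
  · intro e he u hu hus
    simp only [Finset.mem_sdiff] at he
    rw [hprops.1] at hus
    exact he.2 (Phi_mem_tree hm hA he.1 hu (compF_eq_of_mem hus ▸ hτ))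

include hm in
lemma subset_MF {A : Finset (Sym2 V)} (hA : A ⊆ G.edgeFinset) :
    A ⊆ MF G m (Phi G m A) := by
  intro e he
  have hx : e.out.1 ∈ e := Sym2.out_fst_mem e
  have hxA : e.out.1 ∈ supp A := mem_supp_iff'.mpr ⟨e, he, hx⟩
  obtain ⟨τ, hτ, -⟩ := exists_unique_chosenT hm hA hxA
  have heR : e ∈ restrict A (compF A e.out.1) := edge_mem_restrict_compF he hx
  have hem : e ∈ m τ := hτ.2.2 heR
  rw [MF, Finset.mem_union]
  exact Or.inr (Finset.mem_filter.mpr ⟨hA he, τ, Phi_TC hm hA hxA hτ, hem⟩)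

include hm in
/-- for a forest, the restriction to any component is chosen -/
lemma forest_chosen {F : Finset (Sym2 V)} (hF : F ⊆ G.edgeFinset) (hforest : IsForest F)
    {v : V} (hv : v ∈ supp F) :
    chosenT G m F (compF F v) (restrict F (compF F v)) := by
  have hd := nondiag_of_subset_edgeFinset hF
  have hTC := isTreeComponent_restrict hF hv
  have hST := treeComponent_spanningTree hm hF hforest hTC
  have hsupp : supp (restrict F (compF F v)) = compF F v := supp_restrict_compF hd hv
  refine ⟨?_, Finset.Subset.refl _, hST.2.1⟩
  have h0 := hST.1
  rwa [hsupp] at h0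

include hm in
lemma Phi_forest_fixed {F : Finset (Sym2 V)} (hF : F ⊆ G.edgeFinset)
    (hforest : IsForest F) : Phi G m F = F := by
  apply Finset.Subset.antisymm Phi_subset
  intro e he
  have hx : e.out.1 ∈ e := Sym2.out_fst_mem e
  have hxF : e.out.1 ∈ supp F := mem_supp_iff'.mpr ⟨e, he, hx⟩
  rw [Phi, Finset.mem_filter]
  exact ⟨he, e.out.1, hx, _, forest_chosen hm hF hforest hxF,
    edge_mem_restrict_compF he hx⟩

include hm in
lemma interval_reach {F : Finset (Sym2 V)} (hF : F ⊆ G.edgeFinset) (hforest : IsForest F)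
    {A' : Finset (Sym2 V)} (h1 : F ⊆ A') (h2 : A' ⊆ MF G m F) :
    ∀ u w, (H A').Reachable u w ↔ (H F).Reachable u w := by
  intro u w
  constructor
  · refine reachable_of_adj_reachable (fun a b hab => ?_)
    have hadj := hab
    rw [H_adj] at hadj
    have := h2 hadj.1
    rw [MF, Finset.mem_union] at this
    rcases this with hF' | hfil
    · exact (H_adj.mpr ⟨hF', hadj.2⟩).reachable
    · rw [Finset.mem_filter] at hfil
      obtain ⟨-, τ, hTC, hem⟩ := hfil
      have hsub := (treeComponent_spanningTree hm hF hforest hTC).2.2.1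
      have hin := (mem_edgesIn G).mp (hsub hem)
      have ha : a ∈ supp τ := hin.2 a (by simp)
      have hb : b ∈ supp τ := hin.2 b (Sym2.mem_mk_right a b)
      have hr : (H τ).Reachable a b := reachable_of_connOn hTC.2.2.1 ha hb
      exact reachable_of_adj_reachable (fun x y hxy => ((H_mono hTC.1) hxy).reachable) hr
  · exact reachable_of_adj_reachable (fun a b hab => ((H_mono h1) hab).reachable)

include hm in
lemma interval_Phi {F : Finset (Sym2 V)} (hF : F ⊆ G.edgeFinset) (hforest : IsForest F)
    {A' : Finset (Sym2 V)} (h1 : F ⊆ A') (h2 : A' ⊆ MF G m F) :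
    Phi G m A' = F := by
  have hA' : A' ⊆ G.edgeFinset := h2.trans (MF_subset_edgeFinset hF)
  have hreach := interval_reach hm hF hforest h1 h2
  have hcomp : ∀ v : V, compF A' v = compF F v := by
    intro v
    ext w
    rw [mem_compF, mem_compF]
    exact hreach v w
  have hsuppA : supp A' = supp F := by
    apply Finset.Subset.antisymm
    · intro u hu
      rw [mem_supp_iff'] at hu
      obtain ⟨e, he, hue⟩ := hu
      have := h2 he
      rw [MF, Finset.mem_union] at this
      rcases this with hF' | hfil
      · exact mem_supp_iff'.mpr ⟨e, hF', hue⟩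
      · rw [Finset.mem_filter] at hfil
        obtain ⟨-, τ, hTC, hem⟩ := hfil
        have hsub := (treeComponent_spanningTree hm hF hforest hTC).2.2.1
        have hin := (mem_edgesIn G).mp (hsub hem)
        have hu2 : u ∈ supp τ := hin.2 u hue
        rw [mem_supp_iff'] at hu2 ⊢
        obtain ⟨f, hf, huf⟩ := hu2
        exact ⟨f, hTC.1 hf, huf⟩
    · intro u hu
      rw [mem_supp_iff'] at hu ⊢
      obtain ⟨e, he, hue⟩ := hu
      exact ⟨e, h1 he, hue⟩
  have hchosen : ∀ v ∈ supp F, chosenT G m A' (compF A' v) (restrict F (compF F v)) := by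
    intro v hv
    have hbase := forest_chosen hm hF hforest hv
    rw [hcomp]
    refine ⟨hbase.1, ?_, ?_⟩
    · intro e he
      rw [mem_restrict] at he ⊢
      exact ⟨h1 he.1, he.2⟩
    · intro e he
      rw [mem_restrict] at he
      have := h2 he.1
      rw [MF, Finset.mem_union] at this
      rcases this with hF' | hfil
      · exact hbase.2.2 (mem_restrict.mpr ⟨hF', he.2⟩)
      · rw [Finset.mem_filter] at hfil
        obtain ⟨-, τ', hTC', hem⟩ := hfil
        have hsub := (treeComponent_spanningTree hm hF hforest hTC').2.2.1
        have hin := (mem_edgesIn G).mp (hsub hem)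
        have hx : e.out.1 ∈ e := Sym2.out_fst_mem e
        have hxτ : e.out.1 ∈ supp τ' := hin.2 _ hx
        obtain ⟨hsupp', hτ'eq⟩ := isTreeComponent_eq hTC' hxτ
        have hxR : e.out.1 ∈ compF F v := he.2 _ hx
        have hRR : compF F v = compF F e.out.1 := compF_eq_of_mem hxR
        rw [hτ'eq, ← hRR] at hem
        exact hem
  apply Finset.Subset.antisymm
  · intro e he
    have he' := he
    rw [Phi, Finset.mem_filter] at he'
    obtain ⟨heA, v, hv, τ', hτ', heτ'⟩ := he'
    have hvF : v ∈ supp F := by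
      rw [← hsuppA]
      exact mem_supp_iff'.mpr ⟨e, heA, hv⟩
    obtain ⟨τ₀, h₀, huniq⟩ := exists_unique_chosenT hm hA'
      (by rw [hsuppA]; exact hvF)
    rw [huniq τ' hτ'] at heτ'
    rw [← huniq _ (hchosen v hvF)] at heτ'
    exact restrict_subset heτ'
  · intro e he
    have hx : e.out.1 ∈ e := Sym2.out_fst_mem e
    have hxF : e.out.1 ∈ supp F := mem_supp_iff'.mpr ⟨e, he, hx⟩
    rw [Phi, Finset.mem_filter]
    exact ⟨h1 he, e.out.1, hx, _, hchosen _ hxF, edge_mem_restrict_compF he hx⟩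

include hm in
lemma MF_eq_iff {F : Finset (Sym2 V)} (hF : F ⊆ G.edgeFinset) (hforest : IsForest F) :
    MF G m F = F ↔ ∀ τ, IsTreeComponent F τ → m τ = τ := by
  constructor
  · intro heq τ hTC
    have hST := treeComponent_spanningTree hm hF hforest hTC
    apply Finset.Subset.antisymm _ hST.2.1
    intro e he
    have heF : e ∈ F := by
      rw [← heq, MF, Finset.mem_union]
      have : e ∈ edgesIn G (supp τ) := hST.2.2.1 he
      exact Or.inr (Finset.mem_filter.mpr ⟨((mem_edgesIn G).mp this).1, τ, hTC, he⟩)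
    have hin := (mem_edgesIn G).mp (hST.2.2.1 he)
    obtain ⟨x, hxτ⟩ : ∃ x, x ∈ supp τ := by
      obtain ⟨f, hf⟩ := hTC.2.1
      exact ⟨f.out.1, mem_supp_iff'.mpr ⟨f, hf, Sym2.out_fst_mem f⟩⟩
    obtain ⟨hsupp', hτeq⟩ := isTreeComponent_eq hTC hxτ
    rw [hτeq]
    rw [mem_restrict]
    refine ⟨heF, ?_⟩
    intro u hu
    rw [← hsupp']
    exact hin.2 u hu
  · intro hall
    apply Finset.Subset.antisymm _ subset_MF_left
    rw [MF]
    apply Finset.union_subset (Finset.Subset.refl _)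
    intro e he
    rw [Finset.mem_filter] at he
    obtain ⟨-, τ, hTC, hem⟩ := he
    exact hTC.1 (hall τ hTC ▸ hem)

end scheme

section coloring
open SimpleGraph
variable [Fintype V] [DecidableEq V] (G : SimpleGraph V) [DecidableRel G.Adj]

/-- `f` takes equal values on `e` (generic version) -/
def mEq {α : Type*} (f : V → α) (e : Sym2 V) : Prop :=
  Sym2.lift ⟨fun x y => f x = f y, fun x y => propext ⟨Eq.symm, Eq.symm⟩⟩ e

variable {G}

lemma card_forced (q : ℕ) (A : Finset (Sym2 V)) :
    ((Finset.univ.filter (fun f : V → Fin q => ∀ e ∈ A, mEq f e)).card) = q ^ cc A := by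
  classical
  have hconst : ∀ (f : V → Fin q), (∀ e ∈ A, mEq f e) →
      ∀ {v w : V}, (H A).Walk v w → f v = f w := by
    intro f hf v w p
    induction p with
    | nil => rfl
    | @cons a b c ha p ih =>
      have hadj := ha
      rw [H_adj] at hadj
      have h1 : f a = f b := hf _ hadj.1
      exact h1.trans ih
  have e2 : {f : V → Fin q // ∀ e ∈ A, mEq f e} ≃ ((H A).ConnectedComponent → Fin q) :=
    { toFun := fun F => SimpleGraph.ConnectedComponent.lift F.1
        (fun v w p _ => hconst F.1 F.2 p)
      invFun := fun g => ⟨fun v => g ((H A).connectedComponentMk v), by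
        intro e he
        induction e using Sym2.ind with | _ x y =>
        show g ((H A).connectedComponentMk x) = g ((H A).connectedComponentMk y)
        by_cases hxy : x = y
        · rw [hxy]
        · exact congrArg g (SimpleGraph.ConnectedComponent.sound
            (H_adj.mpr ⟨he, hxy⟩).reachable)⟩
      left_inv := fun F => Subtype.ext (funext fun v => rfl)
      right_inv := fun g => funext fun c => by
        induction c using SimpleGraph.ConnectedComponent.ind with | _ v => rfl }
  rw [← Fintype.card_subtype, ← Nat.card_eq_fintype_card, Nat.card_congr e2, Nat.card_fun,
    Nat.card_eq_fintype_card, Fintype.card_fin, cc]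

lemma coloring_card (q : ℕ) :
    (Nat.card (G.Coloring (Fin q)) : ℤ) =
      ∑ A ∈ G.edgeFinset.powerset, (-1 : ℤ) ^ A.card * (q : ℤ) ^ (cc A) := by
  classical
  have e1 : G.Coloring (Fin q) ≃ {f : V → Fin q // ∀ e ∈ G.edgeFinset, ¬ mEq f e} :=
    { toFun := fun C => ⟨C, by
        intro e he
        induction e using Sym2.ind with | _ x y =>
        exact C.valid ((G.mem_edgeSet).mp (SimpleGraph.mem_edgeFinset.mp he))⟩
      invFun := fun f => SimpleGraph.Coloring.mk f.1
        (fun {v w} h hc => f.2 s(v, w) (SimpleGraph.mem_edgeFinset.mpr h) hc)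
      left_inv := fun C => rfl
      right_inv := fun f => Subtype.ext rfl }
  have h1 : Nat.card (G.Coloring (Fin q)) =
      (Finset.univ.filter (fun f : V → Fin q => ∀ e ∈ G.edgeFinset, ¬ mEq f e)).card := by
    rw [Nat.card_congr e1, Nat.card_eq_fintype_card, Fintype.card_subtype]
  rw [h1]
  rw [Finset.natCast_card_filter]
  have h2 : ∀ f : V → Fin q, (if (∀ e ∈ G.edgeFinset, ¬ mEq f e) then (1:ℤ) else 0)
      = ∏ e ∈ G.edgeFinset, ((fun _ => (1:ℤ)) e - (fun e => if mEq f e then (1:ℤ) else 0) e) := by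
    intro f
    by_cases hP : ∀ e ∈ G.edgeFinset, ¬ mEq f e
    · rw [if_pos hP, Finset.prod_eq_one]
      intro e he
      simp only
      rw [if_neg (hP e he), sub_zero]
    · rw [if_neg hP]
      push_neg at hP
      obtain ⟨e, he, hme⟩ := hP
      exact (Finset.prod_eq_zero he (by simp only; rw [if_pos hme]; ring)).symm
  simp_rw [h2, Finset.prod_sub, Finset.prod_const_one, mul_one]
  rw [Finset.sum_comm]
  apply Finset.sum_congr rfl
  intro A hA
  rw [← Finset.mul_sum]
  congr 1
  have h4 : (∑ f : V → Fin q, ∏ e ∈ A, if mEq f e then (1:ℤ) else 0) =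
      ((Finset.univ.filter (fun f : V → Fin q => ∀ e ∈ A, mEq f e)).card : ℤ) := by
    rw [Finset.natCast_card_filter]
    apply Finset.sum_congr rfl
    intro f _
    rw [Finset.prod_boole]
    rcases em (∀ e ∈ A, mEq f e) with h | h
    · rw [if_pos h, if_pos h]
    · rw [if_neg h, if_neg h]
  rw [h4, card_forced q A]
  push_cast
  ring
end coloring

section final
open SimpleGraph Polynomial
variable [Fintype V] [DecidableEq V] {G : SimpleGraph V} [DecidableRel G.Adj]
variable {m : Finset (Sym2 V) → Finset (Sym2 V)} (hm : IsPartitionScheme G m)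

include hm in
theorem scheme_forest_count_eq_coeff' (j : ℕ) (hj : j ≤ Fintype.card V)
    (p : Polynomial ℤ) (hp : ∀ q : ℕ, p.eval (q : ℤ) = Nat.card (G.Coloring (Fin q))) :
    (G.edgeFinset.powerset.filter
        (fun F => IsForest F ∧ (∀ τ, IsTreeComponent F τ → m τ = τ) ∧ F.card = j)).card =
      (p.coeff (Fintype.card V - j)).natAbs := by
  classical
  set n := Fintype.card V with hn
  set Q : Polynomial ℤ :=
    ∑ A ∈ G.edgeFinset.powerset, Polynomial.C ((-1 : ℤ) ^ A.card) * Polynomial.X ^ (cc A) with hQ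
  have hQeval : ∀ x : ℤ, Q.eval x = ∑ A ∈ G.edgeFinset.powerset, (-1 : ℤ) ^ A.card * x ^ (cc A) := by
    intro x
    rw [hQ, Polynomial.eval_finset_sum]
    apply Finset.sum_congr rfl
    intro A _
    rw [Polynomial.eval_mul, Polynomial.eval_C, Polynomial.eval_pow, Polynomial.eval_X]
  have hpQ : p = Q := by
    apply Polynomial.eq_of_infinite_eval_eq
    apply Set.infinite_of_injective_forall_mem (f := ((↑) : ℕ → ℤ)) Nat.cast_injective
    intro q
    show p.eval (q : ℤ) = Q.eval (q : ℤ)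
    rw [hp q, hQeval]
    exact coloring_card q
  have hcoeff : Q.coeff (n - j) =
      ∑ A ∈ G.edgeFinset.powerset.filter (fun A => cc A = n - j), (-1 : ℤ) ^ A.card := by
    rw [hQ, Polynomial.finset_sum_coeff, Finset.sum_filter]
    apply Finset.sum_congr rfl
    intro A _
    rw [Polynomial.coeff_C_mul, Polynomial.coeff_X_pow]
    by_cases h : n - j = cc A
    · rw [if_pos h, if_pos h.symm, mul_one]
    · rw [if_neg h, if_neg (fun hc => h hc.symm), mul_zero]
  set S : Finset (Finset (Sym2 V)) := G.edgeFinset.powerset.filter (fun A => cc A = n - j)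
    with hS
  set T : Finset (Finset (Sym2 V)) :=
    G.edgeFinset.powerset.filter (fun F => IsForest F ∧ F.card = j) with hT
  have hmaps : ∀ A ∈ S, Phi G m A ∈ T := by
    intro A hA
    rw [hS, Finset.mem_filter, Finset.mem_powerset] at hA
    obtain ⟨hAE, hcc⟩ := hA
    have hforest := Phi_isForest hm hAE
    have hccPhi : cc (Phi G m A) = n - j := by rw [← Phi_cc hm hAE]; exact hcc
    have hsum := cc_card_forest (Phi G m A)
      (nondiag_of_subset_edgeFinset (Phi_subset.trans hAE)) hforest
    rw [hT, Finset.mem_filter, Finset.mem_powerset]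
    exact ⟨Phi_subset.trans hAE, hforest, by omega⟩
  have hfiber := Finset.sum_fiberwise_of_maps_to hmaps (fun A => (-1 : ℤ) ^ A.card)
  have hinner : ∀ F ∈ T, (∑ A ∈ S.filter (fun A => Phi G m A = F), (-1 : ℤ) ^ A.card)
      = (-1 : ℤ) ^ j * (if MF G m F = F then 1 else 0) := by
    intro F hF
    rw [hT, Finset.mem_filter, Finset.mem_powerset] at hF
    obtain ⟨hFE, hforest, hcard⟩ := hF
    have hbij : (∑ A ∈ S.filter (fun A => Phi G m A = F), (-1 : ℤ) ^ A.card)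
        = ∑ s ∈ (MF G m F \ F).powerset, (-1 : ℤ) ^ (F.card + s.card) := by
      apply Finset.sum_nbij' (i := fun A => A \ F) (j := fun s => F ∪ s)
      · intro A hA
        rw [Finset.mem_filter] at hA
        obtain ⟨hAS, hPhiA⟩ := hA
        have hAE : A ⊆ G.edgeFinset := by
          rw [hS, Finset.mem_filter, Finset.mem_powerset] at hAS
          exact hAS.1
        have h2 : A ⊆ MF G m F := hPhiA ▸ subset_MF hm hAE
        rw [Finset.mem_powerset]
        exact Finset.sdiff_subset_sdiff h2 (Finset.Subset.refl _)
      · intro s hs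
        rw [Finset.mem_powerset] at hs
        have h1 : F ⊆ F ∪ s := Finset.subset_union_left
        have h2 : F ∪ s ⊆ MF G m F :=
          Finset.union_subset subset_MF_left (hs.trans Finset.sdiff_subset)
        have hAE : F ∪ s ⊆ G.edgeFinset := h2.trans (MF_subset_edgeFinset hFE)
        have hccA : cc (F ∪ s) = cc F := cc_congr (fun u w => (interval_reach hm hFE hforest h1 h2) u w)
        have hccF : cc F + F.card = n :=
          cc_card_forest F (nondiag_of_subset_edgeFinset hFE) hforest
        rw [Finset.mem_filter, hS, Finset.mem_filter, Finset.mem_powerset]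
        refine ⟨⟨hAE, by omega⟩, interval_Phi hm hFE hforest h1 h2⟩
      · intro A hA
        rw [Finset.mem_filter] at hA
        have hFA : F ⊆ A := hA.2 ▸ Phi_subset
        exact Finset.union_sdiff_of_subset hFA
      · intro s hs
        rw [Finset.mem_powerset] at hs
        apply Finset.union_sdiff_cancel_left
        exact Finset.disjoint_sdiff.mono_right hs
      · intro A hA
        rw [Finset.mem_filter] at hA
        have hFA : F ⊆ A := hA.2 ▸ Phi_subset
        have := Finset.card_sdiff_add_card_eq_card hFA
        congr 1
        omega
    rw [hbij]
    simp_rw [pow_add]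
    rw [← Finset.mul_sum, hcard, Finset.sum_powerset_neg_one_pow_card]
    congr 1
    by_cases h : MF G m F = F
    · rw [if_pos h, if_pos (by rw [h]; exact Finset.sdiff_self F)]
    · rw [if_neg h, if_neg ?_]
      intro hc
      rw [Finset.sdiff_eq_empty_iff_subset] at hc
      exact h (Finset.Subset.antisymm hc subset_MF_left)
  have hsum : (∑ A ∈ S, (-1 : ℤ) ^ A.card)
      = (-1 : ℤ) ^ j * ((T.filter (fun F => MF G m F = F)).card : ℤ) := by
    rw [← hfiber, Finset.sum_congr rfl hinner, ← Finset.mul_sum]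
    congr 1
    exact Finset.sum_boole _ _
  have hTfilter : T.filter (fun F => MF G m F = F) =
      G.edgeFinset.powerset.filter
        (fun F => IsForest F ∧ (∀ τ, IsTreeComponent F τ → m τ = τ) ∧ F.card = j) := by
    ext F
    rw [Finset.mem_filter, hT, Finset.mem_filter, Finset.mem_powerset,
      Finset.mem_filter, Finset.mem_powerset]
    constructor
    · rintro ⟨⟨hFE, hforest, hcard⟩, hMF⟩
      exact ⟨hFE, hforest, (MF_eq_iff hm hFE hforest).mp hMF, hcard⟩
    · rintro ⟨hFE, hforest, hall, hcard⟩
      exact ⟨⟨hFE, hforest, hcard⟩, (MF_eq_iff hm hFE hforest).mpr hall⟩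
  rw [← hTfilter, hpQ, hcoeff, hsum, Int.natAbs_mul, Int.natAbs_pow]
  simp
end final


/-- For any partition scheme `m`, the number of forests in `F^m_G` with `j` edges equals the
absolute value of the coefficient of `q^(|V|-j)` in the chromatic polynomial; in particular
it does not depend on `m`. -/
theorem scheme_forest_count_eq_coeff [Fintype V] [DecidableEq V] (G : SimpleGraph V)
    [DecidableRel G.Adj] (m : Finset (Sym2 V) → Finset (Sym2 V))
    (hm : IsPartitionScheme G m) (j : ℕ) (hj : j ≤ Fintype.card V)
    (p : Polynomial ℤ) (hp : ∀ q : ℕ, p.eval (q : ℤ) = Nat.card (G.Coloring (Fin q))) :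
    (G.edgeFinset.powerset.filter
        (fun F => IsForest F ∧ (∀ τ, IsTreeComponent F τ → m τ = τ) ∧ F.card = j)).card =
      (p.coeff (Fintype.card V - j)).natAbs := by
  exact scheme_forest_count_eq_coeff' hm j hj p hp

end BC
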